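/- arXiv:0712.3766 — 2 statements merged into one kernel-verified Lean document; each statement's English description precedes it below -/
import Mathlib

section
/- Let f satisfy the concave-convex conditions: u f''(u) > 0 for all u ≠ 0, f'''(0) ≠ 0, and f'(u) → +∞ as |u| → +∞. Then for each u > 0 there exists a unique v < 0 with f'(v) = (f(u) - f(v))/(u - v), i.e., the tangent function φ^♮ is well defined on positive reals with negative values. -/
/-!
Write `g(v) = f(u) - f(v) - f'(v)(u - v)` for the gap at `u` between `f` and its tangent line
at `v`; the tangent points are the zeros of `g`. Since `f` is strictly concave on `(-∞, 0]`,
`g` is strictly increasing there. Strict convexity on `[0, u]` gives `g(0) > 0`, while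
concavity bounds `g(v) ≤ f(u) - f(0) - f'(v) u`, which is negative once `f'(v)` is large,
i.e. for `v` far to the left. The intermediate value theorem gives exactly one zero `v < 0`.
-/

open Set Filter

noncomputable def tangentGap (f : ℝ → ℝ) (u v : ℝ) : ℝ := f u - f v - deriv f v * (u - v)

section TangentGap

variable {f : ℝ → ℝ} {S : Set ℝ} {u v a : ℝ}

lemma deriv_eq_slope_iff_tangentGap_eq_zero (hvu : v ≠ u) :
    deriv f v = (f u - f v) / (u - v) ↔ tangentGap f u v = 0 := by
  rw [eq_div_iff (sub_ne_zero.2 hvu.symm), tangentGap]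
  constructor <;> intro h <;> linarith

lemma continuous_tangentGap (hf : ContDiff ℝ 1 f) : Continuous (tangentGap f u) :=
  (continuous_const.sub hf.continuous).sub
    ((hf.continuous_deriv le_rfl).mul (continuous_const.sub continuous_id))

lemma StrictConvexOn.tangentGap_pos (hfc : StrictConvexOn ℝ S f) (hv : v ∈ S) (hu : u ∈ S)
    (hvu : v < u) (hf : DifferentiableAt ℝ f v) : 0 < tangentGap f u v := by
  have h := hfc.deriv_lt_slope hv hu hvu hf
  rw [slope_def_field, lt_div_iff₀ (sub_pos.2 hvu)] at h
  rw [tangentGap]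
  linarith

lemma StrictConcaveOn.strictMonoOn_tangentGap (hfc : StrictConcaveOn ℝ S f)
    (hf : ∀ x ∈ S, DifferentiableAt ℝ f x) (hu : u ∈ upperBounds S) :
    StrictMonoOn (tangentGap f u) S := by
  intro v hv w hw hvw
  have hchord : f w - f v < deriv f v * (w - v) := by
    have h := hfc.slope_lt_deriv hv hw hvw (hf v hv)
    rwa [slope_def_field, div_lt_iff₀ (sub_pos.2 hvw)] at h
  have hderiv : deriv f w < deriv f v := hfc.strictAntiOn_deriv hf hv hw hvw
  have hwu : 0 ≤ u - w := sub_nonneg.2 (hu hw)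
  simp only [tangentGap]
  linarith [mul_nonneg (sub_nonneg.2 hderiv.le) hwu]

lemma ConcaveOn.eventually_tangentGap_neg (hfc : ConcaveOn ℝ (Iic a) f) (hf : Differentiable ℝ f)
    (hbot : Tendsto (deriv f) atBot atTop) (hau : a < u) :
    ∀ᶠ v in atBot, tangentGap f u v < 0 := by
  filter_upwards [hbot.eventually_gt_atTop ((f u - f a) / (u - a)), eventually_lt_atBot a]
    with v hlarge hva
  have hchord : f a - f v ≤ deriv f v * (a - v) := by
    have h := hfc.slope_le_deriv hva.le self_mem_Iic hva (hf v)
    rwa [slope_def_field, div_le_iff₀ (sub_pos.2 hva)] at h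
  rw [div_lt_iff₀ (sub_pos.2 hau)] at hlarge
  rw [tangentGap]
  linarith

end TangentGap

lemma StrictMonoOn.existsUnique_lt_eq_zero {g : ℝ → ℝ} {a : ℝ} (hmono : StrictMonoOn g (Iic a))
    (hcont : ContinuousOn g (Iic a)) (ha : 0 < g a) (hbot : ∀ᶠ v in atBot, g v < 0) :
    ∃! v, v < a ∧ g v = 0 := by
  obtain ⟨w, hwa, hw⟩ := (eventually_le_atBot a |>.and hbot).exists
  obtain ⟨v, hv, hgv⟩ := intermediate_value_Icc hwa (hcont.mono Icc_subset_Iic_self)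
    ⟨hw.le, ha.le⟩
  have hva : v < a := hv.2.lt_of_ne (by rintro rfl; exact ha.ne' hgv)
  refine ⟨v, ⟨hva, hgv⟩, fun x ⟨hxa, hgx⟩ => ?_⟩
  exact hmono.injOn hxa.le hva.le (hgx.trans hgv.symm)

theorem tangent_function_well_defined_general
    (f : ℝ → ℝ) (hf : ContDiff ℝ 3 f)
    (hconv : ∀ u : ℝ, u ≠ 0 → u * deriv (deriv f) u > 0)
    (hbot : Filter.Tendsto (deriv f) Filter.atBot Filter.atTop) :
    ∀ u : ℝ, 0 < u →
      ∃! v : ℝ, v < 0 ∧ deriv f v = (f u - f v) / (u - v) := by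
  intro u hu
  have hdiff : Differentiable ℝ f := hf.differentiable (by norm_num)
  have hconcave : StrictConcaveOn ℝ (Iic 0) f :=
    strictConcaveOn_of_deriv2_neg (convex_Iic 0) hdiff.continuous.continuousOn fun x hx => by
      rw [interior_Iic] at hx
      exact neg_of_mul_pos_right (hconv x hx.ne) hx.le
  have hconvex : StrictConvexOn ℝ (Ici 0) f :=
    strictConvexOn_of_deriv2_pos (convex_Ici 0) hdiff.continuous.continuousOn fun x hx => by
      rw [interior_Ici] at hx
      exact pos_of_mul_pos_right (hconv x hx.ne') hx.le
  obtain ⟨v, ⟨hv, hgap⟩, huniq⟩ := StrictMonoOn.existsUnique_lt_eq_zero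
    (hconcave.strictMonoOn_tangentGap (fun x _ => hdiff x) fun _ hx => hx.trans hu.le)
    (continuous_tangentGap (hf.of_le (by norm_num))).continuousOn
    (hconvex.tangentGap_pos self_mem_Ici hu.le hu (hdiff 0))
    (hconcave.concaveOn.eventually_tangentGap_neg hdiff hbot hu)
  have hslope : ∀ w < 0, deriv f w = (f u - f w) / (u - w) ↔ tangentGap f u w = 0 :=
    fun w hw => deriv_eq_slope_iff_tangentGap_eq_zero (hw.trans hu).ne
  exact ⟨v, ⟨hv, (hslope v hv).2 hgap⟩, fun w ⟨hw, h⟩ => huniq w ⟨hw, (hslope w hw).1 h⟩⟩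

/-- For a concave-convex flux `f` (`u f''(u) > 0` for `u ≠ 0`, `f'''(0) ≠ 0`,
`f'(u) → +∞` as `|u| → ∞`), for each `u > 0` there is a unique `v < 0` with
`f'(v) = (f u - f v)/(u - v)`: the tangent function `φ♮` is well defined on
positive reals with negative values. -/
theorem tangent_function_well_defined
    (f : ℝ → ℝ) (hf : ContDiff ℝ 3 f)
    (hconv : ∀ u : ℝ, u ≠ 0 → u * deriv (deriv f) u > 0)
    (h3 : deriv (deriv (deriv f)) 0 ≠ 0)
    (htop : Filter.Tendsto (deriv f) Filter.atTop Filter.atTop)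
    (hbot : Filter.Tendsto (deriv f) Filter.atBot Filter.atTop) :
    ∀ u : ℝ, 0 < u →
      ∃! v : ℝ, v < 0 ∧ deriv f v = (f u - f v) / (u - v) :=
  tangent_function_well_defined_general f hf hconv hbot
end

section
/- Exactness of the reconstruction scheme flux for a traveling discontinuity: let u_l ≠ u_r, σ = (f(u_r)-f(u_l))/(u_r-u_l) > 0, 0 ≤ d ≤ 1, Δt_* = (1-d)Δx/σ, and define the flux F = [min(Δt_*, Δt) f(u_r) + max(Δt - Δt_*, 0) f(u_l)]/Δt. Then Δt·F equals the exact time-integral of f(u(x_{+}, t)) over [0, Δt] for the exact traveling-wave solution u(x,t) = u_l for x - x_- < dΔx + σt, u_r otherwise, evaluated at the right cell edge x_+ = x_- + Δx, provided σΔt ≤ Δx. -/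
/-! At the right cell edge the traveling wave reads `u_r` until the discontinuity arrives at time
`Δt_* ≥ 0` and `u_l` afterwards, so the flux integrand is a step function of `t` with its jump
at `Δt_*`; integrating it splits `[0, Δt]` at `min Δt_* Δt`. -/

open Set intervalIntegral
open scoped Interval

section StepFunction

variable {α β : Type*} [LinearOrder α] {s r T : α} (a b : β)

theorem eqOn_ite_lt_uIoc_of_le_of_le (hr : r ≤ s) (hT : T ≤ s) :
    EqOn (fun t => if s < t then a else b) (fun _ => b) (Ι r T) := fun _ ht =>
  if_neg (not_lt.2 <| (uIoc_subset_uIcc ht).2.trans (max_le hr hT))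

theorem eqOn_ite_lt_uIoc_of_le (hT : s ≤ T) :
    EqOn (fun t => if s < t then a else b) (fun _ => a) (Ι s T) := fun _ ht => by
  rw [uIoc_of_le hT] at ht
  exact if_pos ht.1

end StepFunction

theorem integral_ite_lt {E : Type*} [NormedAddCommGroup E] [NormedSpace ℝ E] [CompleteSpace E]
    (a b : E) {s : ℝ} (hs : 0 ≤ s) (T : ℝ) :
    ∫ t in 0..T, (if s < t then a else b) = min s T • b + max (T - s) 0 • a := by
  rcases le_or_gt T s with hT | hT
  · rw [integral_congr_ae (.of_forall (eqOn_ite_lt_uIoc_of_le_of_le a b hs hT)), integral_const,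
      min_eq_right hT, max_eq_right (sub_nonpos.2 hT), zero_smul, add_zero, sub_zero]
  · have hleft := eqOn_ite_lt_uIoc_of_le_of_le a b hs le_rfl
    have hright := eqOn_ite_lt_uIoc_of_le a b hT.le
    rw [← integral_add_adjacent_intervals
        ((intervalIntegrable_congr hleft).2 intervalIntegrable_const)
        ((intervalIntegrable_congr hright).2 intervalIntegrable_const),
      integral_congr_ae (.of_forall hleft), integral_congr_ae (.of_forall hright),
      integral_const, integral_const, min_eq_left hT.le, max_eq_left (sub_nonneg.2 hT.le),
      sub_zero]

theorem reconstruction_flux_exact_traveling_wave_general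
    (f : ℝ → ℝ) (ul ur xm Δx Δt σ d : ℝ)
    (hΔx : 0 < Δx) (hσ : 0 < σ)
    (hd : 0 ≤ d ∧ d ≤ 1)
    (Δtstar : ℝ) (hstar : Δtstar = (1 - d) * Δx / σ)
    (u : ℝ → ℝ → ℝ)
    (husol : ∀ x t : ℝ, u x t = if x - xm < d * Δx + σ * t then ul else ur) :
    (∫ t in (0 : ℝ)..Δt, f (u (xm + Δx) t))
      = min Δtstar Δt * f ur + max (Δt - Δtstar) 0 * f ul := by
  have hstar_nonneg : 0 ≤ Δtstar :=
    hstar ▸ div_nonneg (mul_nonneg (sub_nonneg.2 hd.2) hΔx.le) hσ.le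
  have hcrossed (t : ℝ) : xm + Δx - xm < d * Δx + σ * t ↔ Δtstar < t := by
    rw [hstar, div_lt_iff₀ hσ]
    constructor <;> intro h <;> linarith
  simp_rw [husol, apply_ite f, hcrossed]
  exact integral_ite_lt (f ul) (f ur) hstar_nonneg Δt

/-- Exactness of the reconstruction scheme flux for a traveling discontinuity: with
a discontinuity at `x̄ = x₋ + d Δx` (`0 ≤ d ≤ 1`), left state `u_l`, right state
`u_r`, speed `σ > 0`, `Δt_* = (1-d)Δx/σ`, and `σ Δt ≤ Δx`, the flux
`Δt F = min(Δt_*, Δt) f(u_r) + max(Δt - Δt_*, 0) f(u_l)` equals the exact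
time-integral of `f(u(x₊, t))` over `[0, Δt]` for the traveling-wave solution. -/
theorem reconstruction_flux_exact_traveling_wave
    (f : ℝ → ℝ) (ul ur xm Δx Δt σ d : ℝ)
    (hne : ul ≠ ur) (hΔx : 0 < Δx) (hΔt : 0 < Δt) (hσ : 0 < σ)
    (hd : 0 ≤ d ∧ d ≤ 1) (hCFL : σ * Δt ≤ Δx)
    (Δtstar : ℝ) (hstar : Δtstar = (1 - d) * Δx / σ)
    (u : ℝ → ℝ → ℝ)
    (husol : ∀ x t : ℝ, u x t = if x - xm < d * Δx + σ * t then ul else ur) :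
    (∫ t in (0 : ℝ)..Δt, f (u (xm + Δx) t))
      = min Δtstar Δt * f ur + max (Δt - Δtstar) 0 * f ul :=
  reconstruction_flux_exact_traveling_wave_general f ul ur xm Δx Δt σ d hΔx hσ hd Δtstar hstar u
    husol
end
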